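/- Let H be the closure of the cyclic subgroup generated by 1 + X^ℓ in the multiplicative group K^×. Then for every n ∈ ℕ, every open subset U ⊆ K^n, and every K-analytic map f : U → K with f(U) ⊆ H, the map f is locally constant. (Thus H is a constancy-enforcing subset of K.) -/

import Mathlib

/- CONTEXT: `p` a prime, `𝔽 = ZMod p` the field with `p` elements, `ℓ ≥ 2` coprime to
`p`.  `K = 𝔽((X))` (realized as `LaurentSeries (ZMod p)`) with its X-adic valuation
topology; `X` is the Hahn series `single 1 1` and `H` is the closure in `K` of the
cyclic subgroup `{(1+X^ℓ)^m : m ∈ ℤ}` of `K^×` generated by `1 + X^ℓ`.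
`K^n = Fin n → K` carries the product (= maximum-norm) topology.  A map `f : U → K` on
an open `U ⊆ K^n` is `K`-analytic if around every point it is given by a convergent
power series in `n` variables (limit of the net of finite partial sums, `HasSum`). -/

noncomputable section

open Filter Topology

variable (p : ℕ) [Fact p.Prime]

/-- `X ∈ 𝔽((X))`. -/
def Xvar : LaurentSeries (ZMod p) := HahnSeries.single (1 : ℤ) (1 : ZMod p)

/-- The closure `H` of the cyclic subgroup generated by `1 + X^ℓ` in `K^×`. -/
def Hclos (ℓ : ℕ) : Set (LaurentSeries (ZMod p)) :=
  closure {z : LaurentSeries (ZMod p) | ∃ m : ℤ, z = (1 + Xvar p ^ ℓ) ^ m}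

/-- `f : U → K`, `U ⊆ K^n` open, is `K`-analytic: around every point `z₀ ∈ U` it is given
by a convergent power series `∑_α a_α (z - z₀)^α` (multi-index notation). -/
def AnalyticOnOpen (n : ℕ) (U : Set (Fin n → LaurentSeries (ZMod p)))
    (f : (Fin n → LaurentSeries (ZMod p)) → LaurentSeries (ZMod p)) : Prop :=
  ∀ z₀ ∈ U, ∃ (a : (Fin n → ℕ) → LaurentSeries (ZMod p))
      (t : Set (Fin n → LaurentSeries (ZMod p))),
    IsOpen t ∧ z₀ ∈ t ∧ t ⊆ U ∧
      ∀ z ∈ t, HasSum (fun α : Fin n → ℕ =>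
        a α * ∏ i, (z i - z₀ i) ^ α i) (f z)

notation "ℤₘ₀" => WithZero (Multiplicative ℤ)

namespace HAux

open WithZero Multiplicative

def oA (s : ℤ) : ℤₘ₀ := WithZero.coe (Multiplicative.ofAdd s)
lemma oA_ne_zero (s : ℤ) : oA s ≠ 0 := WithZero.coe_ne_zero
lemma oA_mul (a b : ℤ) : oA a * oA b = oA (a + b) := by
  simp [oA, ← WithZero.coe_mul, ← ofAdd_add]
lemma oA_lt_iff {a b : ℤ} : oA a < oA b ↔ a < b := by
  simp [oA, WithZero.coe_lt_coe, Multiplicative.ofAdd_lt]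
lemma oA_le_iff {a b : ℤ} : oA a ≤ oA b ↔ a ≤ b := by
  simp [oA, WithZero.coe_le_coe, Multiplicative.ofAdd_le]
lemma oA_inj {a b : ℤ} (h : oA a = oA b) : a = b := by
  simpa [oA, WithZero.coe_inj] using h
lemma oA_zero : oA 0 = 1 := rfl
lemma oA_pow (a : ℤ) (m : ℕ) : oA a ^ m = oA (m * a) := by
  induction m with
  | zero => simp [oA_zero]
  | succ k ih => rw [pow_succ, ih, oA_mul]; congr 1; push_cast; ring
lemma exists_oA (γ : ℤₘ₀) (hγ : γ ≠ 0) : ∃ s : ℤ, γ = oA s := by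
  obtain ⟨u, hu⟩ := WithZero.ne_zero_iff_exists.mp hγ
  exact ⟨Multiplicative.toAdd u, by simp [oA, ← hu]⟩
lemma lt_oA_iff_le (x : ℤₘ₀) (b : ℤ) : x < oA b ↔ x ≤ oA (b - 1) := by
  rcases eq_or_ne x 0 with rfl | hx
  · simp [zero_lt_iff, oA_ne_zero, zero_le']
  · obtain ⟨s, rfl⟩ := exists_oA x hx
    rw [oA_lt_iff, oA_le_iff]; omega

variable (p : ℕ) [Fact p.Prime]

local notation "KK" => LaurentSeries (ZMod p)

instance : CharP (LaurentSeries (ZMod p)) p :=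
  charP_of_injective_ringHom (HahnSeries.C_injective (Γ := ℤ) (R := ZMod p)) p

lemma v_X : Valued.v (Xvar p) = oA (-1) := by exact LaurentSeries.valuation_single_zpow (K := ZMod p) 1

lemma v_X_pow (N : ℕ) : Valued.v (Xvar p ^ N) = oA (-(N : ℤ)) := by
  rw [map_pow, v_X, oA_pow]
  congr 1
  ring

lemma v_nat_le_one (r : ℕ) : Valued.v ((r : KK)) ≤ 1 := by
  induction r with
  | zero => simp
  | succ k ih =>
      push_cast
      exact le_trans (Valued.v.map_add _ _) (max_le ih (le_of_eq Valued.v.map_one))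

lemma v_nat_eq_one (r : ℕ) (hr : ¬ p ∣ r) : Valued.v ((r : KK)) = 1 := by
  have h0 : ((r : ZMod p)) ≠ 0 := by
    rwa [Ne, ZMod.natCast_eq_zero_iff]
  have hpow : ((r : KK)) ^ (p - 1) = 1 := by
    have h1 : ((r : ZMod p)) ^ (p - 1) = 1 := ZMod.pow_card_sub_one_eq_one h0
    have : ((r : KK)) = HahnSeries.C ((r : ZMod p)) := by
      rw [map_natCast]
    rw [this, ← map_pow, h1, map_one]
  have hv := congrArg Valued.v hpow
  rw [map_pow, map_one] at hv
  have hp1 : p - 1 ≠ 0 := by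
    have := (Fact.out : p.Prime).two_le
    omega
  have hvne : Valued.v ((r : KK)) ≠ 0 := by
    intro h
    rw [h, zero_pow hp1] at hv
    exact zero_ne_one hv
  obtain ⟨s, hs⟩ := exists_oA _ hvne
  rw [hs, oA_pow] at hv
  have := oA_inj (hv.trans oA_zero.symm)
  have hs0 : s = 0 := by
    have : ((p : ℤ) - 1) * s = 0 := by push_cast [Nat.cast_sub (Fact.out : p.Prime).one_le] at this ⊢; linarith [this]
    rcases mul_eq_zero.mp this with h | h
    · exfalso; have := (Fact.out : p.Prime).two_le; omega
    · exact h
  rw [hs, hs0, oA_zero]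

end HAux
namespace HAux2
open HAux WithZero Multiplicative

variable (p : ℕ) [Fact p.Prime] (ℓ : ℕ)

local notation "KK" => LaurentSeries (ZMod p)

def uu : LaurentSeries (ZMod p) := 1 + Xvar p ^ ℓ

lemma v_u (hℓ : 1 ≤ ℓ) : Valued.v (uu p ℓ) = 1 := by
  apply Valuation.map_one_add_of_lt
  rw [v_X_pow]
  rw [show (1 : ℤₘ₀) = oA 0 from rfl, oA_lt_iff]
  omega

lemma u_ne_zero (hℓ : 1 ≤ ℓ) : uu p ℓ ≠ 0 := by
  intro h
  have := v_u p ℓ hℓ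
  rw [h, map_zero] at this
  exact zero_ne_one this

lemma v_u_zpow (hℓ : 1 ≤ ℓ) (m : ℤ) : Valued.v (uu p ℓ ^ m) = 1 := by
  rw [map_zpow₀, v_u p ℓ hℓ, one_zpow]

lemma v_u_pow_sub_one (hℓ : 1 ≤ ℓ) (r0 : ℕ) (hn : r0 ≠ 0) :
    Valued.v (uu p ℓ ^ r0 - 1) = oA (-(ℓ * p ^ (r0.factorization p) : ℕ)) := by
  have hp : p.Prime := Fact.out
  set k := r0.factorization p with hk
  set r := r0 / p ^ k with hrdef
  have hfact : p ^ k * r = r0 := Nat.ordProj_mul_ordCompl_eq_self r0 p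
  have hr : ¬ p ∣ r := Nat.not_dvd_ordCompl hp hn
  have hr0 : r ≠ 0 := by
    intro h; rw [h, mul_zero] at hfact; exact hn hfact.symm
  set N : ℕ := ℓ * p ^ k with hN
  have hN1 : 1 ≤ N := by
    have : 0 < p ^ k := pow_pos hp.pos k
    have := Nat.one_le_iff_ne_zero.mpr (by positivity : N ≠ 0)
    exact this
  set T : LaurentSeries (ZMod p) := Xvar p ^ N with hT
  have hvT : Valued.v T = oA (-(N : ℤ)) := v_X_pow p N
  have hu : uu p ℓ ^ r0 = (1 + T) ^ r := by
    rw [← hfact, pow_mul]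
    congr 1
    have hchar := add_pow_char_pow (1 : LaurentSeries (ZMod p)) (Xvar p ^ ℓ) p k
    rw [uu, hchar, one_pow, ← pow_mul]
  have hexp : uu p ℓ ^ r0 - 1
      = ∑ j ∈ Finset.range (r + 1) \ {0}, T ^ j * (r.choose j : LaurentSeries (ZMod p)) := by
    rw [hu, add_comm, add_pow]
    simp only [one_pow, mul_one]
    have h0m : (0 : ℕ) ∈ Finset.range (r + 1) := by simp
    rw [Finset.sum_eq_sum_sdiff_singleton_add h0m]
    simp
  rw [hexp]
  have h1m : (1 : ℕ) ∈ Finset.range (r + 1) \ {0} := by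
    simp [Nat.pos_of_ne_zero hr0]
  have hmain : Valued.v (T ^ 1 * (r.choose 1 : LaurentSeries (ZMod p))) = oA (-(N : ℤ)) := by
    rw [pow_one, Nat.choose_one_right, map_mul, v_nat_eq_one p r hr, mul_one, hvT]
  rw [Valuation.map_sum_eq_of_lt _ h1m ?_, hmain]
  intro j hj
  simp only [Finset.mem_sdiff, Finset.mem_range, Finset.mem_singleton] at hj
  have hj2 : 2 ≤ j := by omega
  rw [hmain, map_mul, map_pow, hvT]
  calc oA (-(N:ℤ)) ^ j * Valued.v ((r.choose j : LaurentSeries (ZMod p)))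
      ≤ oA (-(N:ℤ)) ^ j * 1 := mul_le_mul_right (v_nat_le_one p _) _
    _ = oA (j * (-(N:ℤ))) := by rw [mul_one, oA_pow]
    _ < oA (-(N:ℤ)) := by
        rw [oA_lt_iff]
        have : (1:ℤ) ≤ (N:ℤ) := by exact_mod_cast hN1
        nlinarith [hj2, this]

lemma v_u_zpow_sub_one (hℓ : 1 ≤ ℓ) (m : ℤ) (hm : m ≠ 0) :
    Valued.v (uu p ℓ ^ m - 1) = oA (-(ℓ * p ^ (m.natAbs.factorization p) : ℕ)) := by
  have hne := u_ne_zero p ℓ hℓ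
  rcases lt_trichotomy m 0 with hneg | rfl | hpos
  · have h1 : uu p ℓ ^ m * uu p ℓ ^ (-m) = 1 := by
      rw [← zpow_add₀ hne]; simp
    have key : uu p ℓ ^ m - 1 = (-(uu p ℓ ^ m)) * (uu p ℓ ^ (-m) - 1) := by
      linear_combination h1
    rw [key, map_mul, Valuation.map_neg, v_u_zpow p ℓ hℓ, one_mul]
    have hmpos : 0 < -m := by omega
    have : uu p ℓ ^ (-m) = uu p ℓ ^ ((-m).toNat) := by
      rw [← zpow_natCast]
      congr 1
      omega
    have habs : (-m).toNat = m.natAbs := by omega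
    rw [this, v_u_pow_sub_one p ℓ hℓ _ (by omega), habs]
  · exact absurd rfl hm
  · have : uu p ℓ ^ m = uu p ℓ ^ (m.toNat) := by
      rw [← zpow_natCast]; congr 1; omega
    have habs : m.toNat = m.natAbs := by omega
    rw [this, v_u_pow_sub_one p ℓ hℓ _ (by omega), habs]

end HAux2
namespace HAux3
open HAux HAux2 WithZero Multiplicative Filter Topology Set

variable (p : ℕ) [Fact p.Prime] (ℓ : ℕ)

/-- possible valuations of differences of elements of `H`. -/
def Dset : Set (LaurentSeries (ZMod p)) :=
  {x | x = 0 ∨ ∃ k : ℕ, Valued.v x = oA (-(ℓ * p ^ k : ℕ))}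

lemma isClosed_Dset : IsClosed (Dset p ℓ) := by
  rw [← isOpen_compl_iff, isOpen_iff_mem_nhds]
  intro x hx
  simp only [Dset, mem_compl_iff, mem_setOf_eq, not_or, not_exists] at hx
  obtain ⟨hx0, hxk⟩ := hx
  have hv0 : Valued.v x ≠ 0 := by
    simpa using hx0
  refine mem_of_superset (Valued.locally_const hv0) ?_
  intro y hy
  simp only [mem_setOf_eq] at hy
  simp only [Dset, mem_compl_iff, mem_setOf_eq, not_or, not_exists]
  constructor
  · intro h; rw [h, map_zero] at hy; exact hv0 hy.symm
  · intro k; rw [hy]; exact hxk k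

lemma diff_mem_Dset (hℓ : 1 ≤ ℓ) {h h' : LaurentSeries (ZMod p)}
    (hh : h ∈ Hclos p ℓ) (hh' : h' ∈ Hclos p ℓ) : h - h' ∈ Dset p ℓ := by
  set G : Set (LaurentSeries (ZMod p)) := {z | ∃ m : ℤ, z = (1 + Xvar p ^ ℓ) ^ m} with hG
  have hGG : ∀ q ∈ G ×ˢ G, (fun q : LaurentSeries (ZMod p) × LaurentSeries (ZMod p) =>
      q.1 - q.2) q ∈ Dset p ℓ := by
    rintro ⟨x, y⟩ ⟨⟨m, rfl⟩, ⟨m', rfl⟩⟩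
    by_cases hmm : m = m'
    · left; simp [hmm]
    · right
      have hne := u_ne_zero p ℓ hℓ
      have key : (uu p ℓ) ^ m - (uu p ℓ) ^ m' = (uu p ℓ) ^ m' * ((uu p ℓ) ^ (m - m') - 1) := by
        rw [mul_sub, mul_one, ← zpow_add₀ hne]
        ring_nf
      refine ⟨(m - m').natAbs.factorization p, ?_⟩
      show Valued.v ((uu p ℓ) ^ m - (uu p ℓ) ^ m') = _
      rw [key, map_mul, v_u_zpow p ℓ hℓ, one_mul,
        v_u_zpow_sub_one p ℓ hℓ _ (sub_ne_zero.mpr hmm)]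
  have hmem : (h, h') ∈ closure (G ×ˢ G) := by
    rw [closure_prod_eq]
    exact ⟨hh, hh'⟩
  have hcont : Continuous fun q : LaurentSeries (ZMod p) × LaurentSeries (ZMod p) =>
      q.1 - q.2 := continuous_sub
  have himg : h - h' ∈ closure ((fun q : LaurentSeries (ZMod p) × LaurentSeries (ZMod p) =>
      q.1 - q.2) '' (G ×ˢ G)) :=
    image_closure_subset_closure_image hcont (mem_image_of_mem _ hmem)
  have himgsub : ((fun q : LaurentSeries (ZMod p) × LaurentSeries (ZMod p) =>
      q.1 - q.2) '' (G ×ˢ G)) ⊆ Dset p ℓ := by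
    rintro x ⟨q, hq, rfl⟩
    exact hGG q hq
  exact (isClosed_Dset p ℓ).closure_subset ((closure_mono himgsub) himg)

lemma v_hasSum_le {ι : Type*} {g : ι → LaurentSeries (ZMod p)} {s : LaurentSeries (ZMod p)}
    (hg : HasSum g s) {γ : ℤₘ₀} (hγ : γ ≠ 0) (hb : ∀ i, Valued.v (g i) ≤ γ) :
    Valued.v s ≤ γ := by
  have hC : IsClosed {x : LaurentSeries (ZMod p) | Valued.v x ≤ γ} := by
    rw [← isOpen_compl_iff, isOpen_iff_mem_nhds]
    intro x hx
    simp only [mem_compl_iff, mem_setOf_eq, not_le] at hx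
    have hx0 : Valued.v x ≠ 0 := fun h => by
      rw [h] at hx; exact (not_lt_of_ge zero_le') hx
    refine mem_of_superset (Valued.locally_const hx0) ?_
    intro y hy
    simp only [mem_setOf_eq] at hy
    simp only [mem_compl_iff, mem_setOf_eq, not_le, hy]
    exact hx
  exact hC.mem_of_tendsto hg
    (Filter.Eventually.of_forall fun fs => Valuation.map_sum_le _ fun i _ => hb i)

lemma exists_j_lt (γ : ℤₘ₀) (hγ : γ ≠ 0) : ∃ J : ℕ, ∀ j : ℕ, J ≤ j → oA (-(j : ℤ)) < γ := by
  obtain ⟨s, rfl⟩ := exists_oA γ hγ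
  refine ⟨((-s).toNat + 1), fun j hj => ?_⟩
  rw [oA_lt_iff]
  have := Int.self_le_toNat (-s)
  omega

instance : Infinite (LaurentSeries (ZMod p)) :=
  Infinite.of_injective (fun n : ℕ => Xvar p ^ n) (by
    intro a b hab
    have := congrArg Valued.v hab
    rw [v_X_pow, v_X_pow] at this
    have := oA_inj this
    omega)

end HAux3
namespace HAux4
open HAux HAux2 HAux3 WithZero Multiplicative Filter Topology Set

variable (p : ℕ) [Fact p.Prime]

lemma exists_dir {n : ℕ} (a : (Fin n → ℕ) → LaurentSeries (ZMod p))
    (Ed : Finset (Fin n → ℕ)) (αd : Fin n → ℕ) (hαd : αd ∈ Ed) (hne : a αd ≠ 0) :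
    ∃ vv : Fin n → LaurentSeries (ZMod p), (∑ α ∈ Ed, a α * ∏ i, vv i ^ α i) ≠ 0 := by
  classical
  by_contra hcon
  push_neg at hcon
  set P : MvPolynomial (Fin n) (LaurentSeries (ZMod p)) :=
    ∑ α ∈ Ed, MvPolynomial.monomial (Finsupp.equivFunOnFinite.symm α) (a α) with hP
  have heval : ∀ x : Fin n → LaurentSeries (ZMod p), MvPolynomial.eval x P
      = ∑ α ∈ Ed, a α * ∏ i, x i ^ α i := by
    intro x
    rw [hP, MvPolynomial.eval_sum]
    refine Finset.sum_congr rfl fun α _ => ?_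
    rw [MvPolynomial.eval_monomial]
    congr 1
    rw [Finsupp.prod_fintype]
    · simp
    · intro i; exact pow_zero _
  have hP0 : P = 0 := by
    apply MvPolynomial.funext
    intro x
    rw [heval, map_zero]
    exact hcon x
  have hco : MvPolynomial.coeff (Finsupp.equivFunOnFinite.symm αd) P = a αd := by
    rw [hP, MvPolynomial.coeff_sum, Finset.sum_eq_single αd]
    · rw [MvPolynomial.coeff_monomial, if_pos rfl]
    · intro β _ hne'
      rw [MvPolynomial.coeff_monomial, if_neg]
      intro h
      exact hne' (Finsupp.equivFunOnFinite.symm.injective h)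
    · intro h; exact absurd hαd h
  rw [hP0] at hco
  simp only [MvPolynomial.coeff_zero] at hco
  exact hne hco.symm

lemma endgame (ℓ : ℕ) (hℓ : 1 ≤ ℓ) {d : ℕ} (hd : 0 < d) (e : ℤ) (J₀ : ℕ)
    (hall : ∀ j : ℕ, J₀ ≤ j → ∃ k : ℕ, (j : ℤ) * d - e = ((ℓ * p ^ k : ℕ) : ℤ)) : False := by
  have hp : p.Prime := Fact.out
  obtain ⟨k₁, h₁⟩ := hall J₀ le_rfl
  set A : ℕ := ℓ * p ^ k₁ with hA
  obtain ⟨k₂, h₂⟩ := hall (J₀ + A) (by omega)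
  obtain ⟨k₃, h₃⟩ := hall (J₀ + 2 * A) (by omega)
  push_cast at h₁ h₂ h₃
  have e₂ : (A : ℤ) * (1 + (d:ℤ)) = (ℓ:ℤ) * (p:ℤ) ^ k₂ := by linear_combination h₂ - h₁
  have e₃ : (A : ℤ) * (1 + 2 * (d:ℤ)) = (ℓ:ℤ) * (p:ℤ) ^ k₃ := by linear_combination h₃ - h₁
  have e₂' : p ^ k₁ * (1 + d) = p ^ k₂ := by
    have h : ℓ * (p ^ k₁ * (1 + d)) = ℓ * p ^ k₂ := by
      rw [← mul_assoc, ← hA]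
      exact_mod_cast e₂
    exact Nat.eq_of_mul_eq_mul_left (by omega) h
  have e₃' : p ^ k₁ * (1 + 2 * d) = p ^ k₃ := by
    have h : ℓ * (p ^ k₁ * (1 + 2 * d)) = ℓ * p ^ k₃ := by
      rw [← mul_assoc, ← hA]
      exact_mod_cast e₃
    exact Nat.eq_of_mul_eq_mul_left (by omega) h
  have hpk₁ : 0 < p ^ k₁ := Nat.pow_pos hp.pos
  have hk₁₂ : k₁ ≤ k₂ := by
    have h1 : p ^ k₁ ≤ p ^ k₂ := by
      calc p ^ k₁ ≤ p ^ k₁ * (1 + d) := Nat.le_mul_of_pos_right _ (by omega)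
        _ = p ^ k₂ := e₂'
    exact (Nat.pow_le_pow_iff_right hp.one_lt).mp h1
  have hk₁₃ : k₁ ≤ k₃ := by
    have h1 : p ^ k₁ ≤ p ^ k₃ := by
      calc p ^ k₁ ≤ p ^ k₁ * (1 + 2 * d) := Nat.le_mul_of_pos_right _ (by omega)
        _ = p ^ k₃ := e₃'
    exact (Nat.pow_le_pow_iff_right hp.one_lt).mp h1
  have ha : 1 + d = p ^ (k₂ - k₁) := by
    have hsplit : p ^ k₂ = p ^ k₁ * p ^ (k₂ - k₁) := by
      rw [← pow_add]; congr 1; omega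
    rw [hsplit] at e₂'
    exact Nat.eq_of_mul_eq_mul_left hpk₁ e₂'
  have hb : 1 + 2 * d = p ^ (k₃ - k₁) := by
    have hsplit : p ^ k₃ = p ^ k₁ * p ^ (k₃ - k₁) := by
      rw [← pow_add]; congr 1; omega
    rw [hsplit] at e₃'
    exact Nat.eq_of_mul_eq_mul_left hpk₁ e₃'
  have hab : k₂ - k₁ ≤ k₃ - k₁ := by
    by_contra hcon
    have : p ^ (k₃ - k₁) < p ^ (k₂ - k₁) := Nat.pow_lt_pow_right hp.one_lt (by omega)
    omega
  have hdvd : p ^ (k₂ - k₁) ∣ p ^ (k₃ - k₁) := pow_dvd_pow p hab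
  have hone : p ^ (k₂ - k₁) ∣ 1 := by
    have hsub : p ^ (k₂ - k₁) ∣ 2 * p ^ (k₂ - k₁) - p ^ (k₃ - k₁) :=
      Nat.dvd_sub (dvd_mul_left _ 2) hdvd
    rwa [show 2 * p ^ (k₂ - k₁) - p ^ (k₃ - k₁) = 1 by omega] at hsub
  have hpk : p ^ (k₂ - k₁) = 1 := Nat.dvd_one.mp hone
  omega

end HAux4

set_option maxHeartbeats 3200000 in
open HAux HAux2 HAux3 HAux4 WithZero Multiplicative in
/-- for every `n ∈ ℕ`, every open `U ⊆ K^n` and every `K`-analytic map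
`f : U → K` with `f(U) ⊆ H`, the map `f` is locally constant; thus `H` is a
constancy-enforcing subset of `K`. -/
theorem analytic_map_into_Hclos_locally_constant
    (ℓ : ℕ) (hℓ : 2 ≤ ℓ) (hcop : Nat.Coprime p ℓ)
    (n : ℕ) (U : Set (Fin n → LaurentSeries (ZMod p))) (hU : IsOpen U)
    (f : (Fin n → LaurentSeries (ZMod p)) → LaurentSeries (ZMod p))
    (hf : AnalyticOnOpen p n U f)
    (hfH : ∀ z ∈ U, f z ∈ Hclos p ℓ) :
    ∀ z₀ ∈ U, ∃ t : Set (Fin n → LaurentSeries (ZMod p)),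
      IsOpen t ∧ z₀ ∈ t ∧ t ⊆ U ∧ ∀ z ∈ t, f z = f z₀ := by
  classical
  intro z₀ hz₀
  obtain ⟨a, t, ht_open, hz₀t, htU, hsum⟩ := hf z₀ hz₀
  have hℓ1 : 1 ≤ ℓ := by omega
  -- value at the center
  have hfz₀ : f z₀ = a 0 := by
    have h0 := hsum z₀ hz₀t
    have h1 : HasSum (fun α : Fin n → ℕ => a α * ∏ i, (z₀ i - z₀ i) ^ α i)
        (a 0 * ∏ i, (z₀ i - z₀ i) ^ (0 : Fin n → ℕ) i) := by
      apply hasSum_single (0 : Fin n → ℕ)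
      intro α hα
      obtain ⟨i, hi⟩ : ∃ i, α i ≠ 0 := by
        by_contra hcon; push_neg at hcon; exact hα (funext hcon)
      rw [Finset.prod_eq_zero (Finset.mem_univ i) (by simp [zero_pow hi]), mul_zero]
    have h2 := h0.unique h1
    simpa using h2
  by_cases hconst : ∀ α : Fin n → ℕ, α ≠ 0 → a α = 0
  · -- all higher coefficients vanish: f is constant on t
    refine ⟨t, ht_open, hz₀t, htU, fun z hz => ?_⟩
    have h0 := hsum z hz
    have h1 : HasSum (fun α : Fin n → ℕ => a α * ∏ i, (z i - z₀ i) ^ α i)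
        (a 0 * ∏ i, (z i - z₀ i) ^ (0 : Fin n → ℕ) i) := by
      apply hasSum_single (0 : Fin n → ℕ)
      intro α hα
      rw [hconst α hα, zero_mul]
    have h2 := h0.unique h1
    rw [hfz₀]
    simpa using h2
  · exfalso
    push_neg at hconst
    obtain ⟨α₀, hα₀ne, hα₀⟩ := hconst
    -- minimal positive degree with a nonzero coefficient
    have hex : ∃ d : ℕ, 0 < d ∧ ∃ α : Fin n → ℕ, (∑ i, α i) = d ∧ a α ≠ 0 := by
      refine ⟨∑ i, α₀ i, ?_, α₀, rfl, hα₀⟩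
      rcases Nat.eq_zero_or_pos (∑ i, α₀ i) with h0 | h
      · exfalso
        apply hα₀ne
        funext i
        exact Finset.sum_eq_zero_iff.mp h0 i (Finset.mem_univ i)
      · exact h
    set d : ℕ := Nat.find hex with hdd
    obtain ⟨hd_pos, αd, hαd_deg, hαd_ne⟩ := Nat.find_spec hex
    have hmin : ∀ α : Fin n → ℕ, 0 < (∑ i, α i) → (∑ i, α i) < d → a α = 0 := by
      intro α h1 h2
      by_contra hne
      exact Nat.find_min hex h2 ⟨h1, α, rfl, hne⟩
    -- the finset of multi-indices of degree d
    set Ed : Finset (Fin n → ℕ) :=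
      (Fintype.piFinset fun _ : Fin n => Finset.range (d + 1)).filter
        (fun α => (∑ i, α i) = d) with hEd
    have hEd_mem : ∀ α : Fin n → ℕ, α ∈ Ed ↔ (∑ i, α i) = d := by
      intro α
      simp only [hEd, Finset.mem_filter, Fintype.mem_piFinset, Finset.mem_range]
      constructor
      · rintro ⟨-, h⟩; exact h
      · intro h
        refine ⟨fun i => ?_, h⟩
        have : α i ≤ ∑ i, α i :=
          Finset.single_le_sum (f := fun i => α i) (fun i _ => Nat.zero_le _) (Finset.mem_univ i)
        omega
    -- choose a direction where the degree-d part does not vanish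
    obtain ⟨vv, hc⟩ := exists_dir p a Ed αd ((hEd_mem αd).mpr hαd_deg) hαd_ne
    set c : LaurentSeries (ZMod p) := ∑ α ∈ Ed, a α * ∏ i, vv i ^ α i with hcdef
    obtain ⟨e, he⟩ := exists_oA (Valued.v c) ((Valuation.ne_zero_iff _).mpr hc)
    -- a ball in the direction vv staying inside t
    have hcont : Continuous fun w : LaurentSeries (ZMod p) => z₀ + w • vv := by fun_prop
    have hnhd : (fun w : LaurentSeries (ZMod p) => z₀ + w • vv) ⁻¹' t ∈
        𝓝 (0 : LaurentSeries (ZMod p)) := by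
      apply hcont.continuousAt.preimage_mem_nhds
      have hzz : z₀ + (0 : LaurentSeries (ZMod p)) • vv = z₀ := by
        funext i
        simp
      have h00 : t ∈ 𝓝 (z₀ + (0 : LaurentSeries (ZMod p)) • vv) := by
        rw [hzz]
        exact ht_open.mem_nhds hz₀t
      exact h00
    obtain ⟨γ₀, hγ₀⟩ := Valued.mem_nhds_zero.mp hnhd
    obtain ⟨j₀, hj₀⟩ := exists_j_lt (MonoidWithZeroHom.ValueGroup₀.embedding γ₀.1) ((map_ne_zero _).mpr γ₀.ne_zero)
    have hmem_t : ∀ j : ℕ, j₀ ≤ j → z₀ + (Xvar p ^ j) • vv ∈ t := by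
      intro j hj
      apply hγ₀
      show Valued.v.restrict (Xvar p ^ j) < γ₀.1
      rw [Valuation.restrict_lt_iff_lt_embedding]
      rw [v_X_pow]
      exact hj₀ j hj
    -- rewriting the summands along the line
    have hprod : ∀ (w : LaurentSeries (ZMod p)) (α : Fin n → ℕ),
        (∏ i, ((z₀ + w • vv) i - z₀ i) ^ α i) = (∏ i, vv i ^ α i) * w ^ (∑ i, α i) := by
      intro w α
      have hcoord : ∀ i, (z₀ + w • vv) i - z₀ i = w * vv i := by
        intro i
        simp only [Pi.add_apply, Pi.smul_apply, smul_eq_mul]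
        ring
      simp_rw [hcoord, mul_pow]
      rw [Finset.prod_mul_distrib, Finset.prod_pow_eq_pow_sum]
      ring
    -- a uniform bound for the coefficients from convergence at radius j₀
    have hF₀ : HasSum
        (fun α : Fin n → ℕ => a α * ((∏ i, vv i ^ α i) * (Xvar p ^ j₀) ^ (∑ i, α i)))
        (f (z₀ + (Xvar p ^ j₀) • vv)) := by
      simpa only [hprod] using hsum _ (hmem_t j₀ le_rfl)
    have hcof : ∀ᶠ α : (Fin n → ℕ) in Filter.cofinite,
        Valued.v (a α * ((∏ i, vv i ^ α i) * (Xvar p ^ j₀) ^ (∑ i, α i))) < 1 := by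
      have hball : {x : LaurentSeries (ZMod p) | Valued.v x < 1} ∈
          𝓝 (0 : LaurentSeries (ZMod p)) := by
        rw [Valued.mem_nhds_zero]
        exact ⟨1, fun x hx => by simpa [Valuation.restrict_lt_one_iff] using hx⟩
      exact hF₀.summable.tendsto_cofinite_zero.eventually
        (Filter.eventually_of_mem hball fun x hx => hx)
    have hfin : {α : Fin n → ℕ |
        ¬ Valued.v (a α * ((∏ i, vv i ^ α i) * (Xvar p ^ j₀) ^ (∑ i, α i))) < 1}.Finite :=
      Filter.eventually_cofinite.mp hcof
    set M : ℤₘ₀ := (hfin.toFinset.sup fun α =>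
      Valued.v (a α * ((∏ i, vv i ^ α i) * (Xvar p ^ j₀) ^ (∑ i, α i)))) ⊔ 1 with hM
    have hMbound : ∀ α : Fin n → ℕ,
        Valued.v (a α * ((∏ i, vv i ^ α i) * (Xvar p ^ j₀) ^ (∑ i, α i))) ≤ M := by
      intro α
      by_cases hα : α ∈ hfin.toFinset
      · exact le_sup_of_le_left (Finset.le_sup (f := fun α => Valued.v (a α * ((∏ i, vv i ^ α i) * (Xvar p ^ j₀) ^ (∑ i, α i)))) hα)
      · rw [Set.Finite.mem_toFinset] at hα
        simp only [Set.mem_setOf_eq, not_not] at hα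
        exact le_sup_of_le_right hα.le
    have hM0 : M ≠ 0 := (lt_of_lt_of_le zero_lt_one le_sup_right).ne'
    obtain ⟨μ, hμ⟩ := exists_oA M hM0
    -- per-term estimate for higher-degree terms
    have hterm : ∀ (j : ℕ) (α : Fin n → ℕ), j₀ + 1 ≤ j → d + 1 ≤ (∑ i, α i) →
        Valued.v (a α * ((∏ i, vv i ^ α i) * (Xvar p ^ j) ^ (∑ i, α i)))
          ≤ oA (μ - ((j : ℤ) - (j₀ : ℤ)) * ((d : ℤ) + 1)) := by
      intro j α hj hD
      by_cases hav : a α * (∏ i, vv i ^ α i) = 0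
      · rw [← mul_assoc, hav, zero_mul, map_zero]
        exact zero_le'
      · obtain ⟨s, hs⟩ := exists_oA _ ((Valuation.ne_zero_iff _).mpr hav)
        have hvj : ∀ j' : ℕ, Valued.v (a α * ((∏ i, vv i ^ α i) * (Xvar p ^ j') ^ (∑ i, α i)))
            = oA (s - (j' : ℤ) * (∑ i, α i : ℕ)) := by
          intro j'
          rw [← mul_assoc, map_mul, hs, map_pow, v_X_pow, oA_pow, oA_mul]
          congr 1
          push_cast
          ring
        have hb1 : oA (s - (j₀ : ℤ) * (∑ i, α i : ℕ)) ≤ oA μ := by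
          rw [← hvj j₀, ← hμ]
          exact hMbound α
        rw [oA_le_iff] at hb1
        rw [hvj j, oA_le_iff]
        have hcast : ((d : ℤ) + 1) ≤ ((∑ i, α i : ℕ) : ℤ) := by exact_mod_cast hD
        have hjj : (1 : ℤ) ≤ (j : ℤ) - (j₀ : ℤ) := by exact_mod_cast (by omega : 1 ≤ (j : ℤ) - j₀)
        nlinarith [hb1, hcast, hjj]
    -- the threshold
    set J₀ : ℕ := j₀ + 1 + (μ + (j₀ : ℤ) * ((d : ℤ) + 1) - e).toNat + 1 with hJ₀
    have hJ₀big : (J₀ : ℤ) > μ + (j₀ : ℤ) * ((d : ℤ) + 1) - e := by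
      have := Int.self_le_toNat (μ + (j₀ : ℤ) * ((d : ℤ) + 1) - e)
      push_cast [hJ₀]
      omega
    -- valuation of f(z_j) - f(z₀) for all j ≥ J₀
    have hall : ∀ j : ℕ, J₀ ≤ j → ∃ k : ℕ, (j : ℤ) * d - e = ((ℓ * p ^ k : ℕ) : ℤ) := by
      intro j hjJ
      have hzjt : z₀ + (Xvar p ^ j) • vv ∈ t := hmem_t j (by omega)
      have hFsum : HasSum
          (fun α : Fin n → ℕ => a α * ((∏ i, vv i ^ α i) * (Xvar p ^ j) ^ (∑ i, α i)))
          (f (z₀ + (Xvar p ^ j) • vv)) := by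
        simpa only [hprod] using hsum _ hzjt
      have h0Ed : (0 : Fin n → ℕ) ∉ Ed := by
        rw [hEd_mem]
        simp only [Pi.zero_apply, Finset.sum_const_zero]
        omega
      have hsumEd : ∑ α ∈ Ed, (if α ∈ Ed
            then a α * ((∏ i, vv i ^ α i) * (Xvar p ^ j) ^ (∑ i, α i)) else 0)
          = c * (Xvar p ^ j) ^ d := by
        rw [hcdef, Finset.sum_mul]
        refine Finset.sum_congr rfl fun α hα => ?_
        rw [if_pos hα, (hEd_mem α).mp hα]
        ring
      have hEdsum : HasSum (fun α : Fin n → ℕ => if α ∈ Ed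
            then a α * ((∏ i, vv i ^ α i) * (Xvar p ^ j) ^ (∑ i, α i)) else 0)
          (c * (Xvar p ^ j) ^ d) := by
        rw [← hsumEd]
        exact hasSum_sum_of_ne_finset_zero (fun b hb => if_neg hb)
      have h0sum : HasSum (fun α : Fin n → ℕ => if α = 0 then a 0 else 0)
          (a 0) := hasSum_ite_eq 0 (a 0)
      have htail := (hFsum.sub h0sum).sub hEdsum
      have hvtail : Valued.v (f (z₀ + (Xvar p ^ j) • vv) - a 0 - c * (Xvar p ^ j) ^ d)
          ≤ oA (e - (j : ℤ) * d - 1) := by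
        apply v_hasSum_le p htail (oA_ne_zero _)
        intro α
        by_cases hα0 : α = 0
        · subst hα0
          rw [if_pos rfl, if_neg h0Ed]
          rw [show a (0 : Fin n → ℕ) * ((∏ i, vv i ^ (0 : Fin n → ℕ) i)
              * (Xvar p ^ j) ^ (∑ i, (0 : Fin n → ℕ) i)) = a 0 from by simp]
          rw [sub_self, sub_zero, map_zero]
          exact zero_le'
        · rw [if_neg hα0]
          by_cases hαEd : α ∈ Ed
          · rw [if_pos hαEd, sub_zero, sub_self, map_zero]
            exact zero_le'
          · rw [if_neg hαEd, sub_zero, sub_zero]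
            rcases lt_trichotomy (∑ i, α i) d with hlt | heq | hgt
            · rcases Nat.eq_zero_or_pos (∑ i, α i) with hz | hpos
              · exfalso
                apply hα0
                funext i
                exact Finset.sum_eq_zero_iff.mp hz i (Finset.mem_univ i)
              · rw [hmin α hpos hlt, zero_mul, map_zero]
                exact zero_le'
            · exact absurd ((hEd_mem α).mpr heq) hαEd
            · refine le_trans (hterm j α (by omega) (by omega)) ?_
              rw [oA_le_iff]
              have hDexp : ((j : ℤ) - (j₀ : ℤ)) * ((d : ℤ) + 1)
                  = (j : ℤ) * (d : ℤ) + (j : ℤ) - (j₀ : ℤ) * ((d : ℤ) + 1) := by ring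
              have hjJ' : (J₀ : ℤ) ≤ (j : ℤ) := by exact_mod_cast hjJ
              linarith [hDexp, hJ₀big, hjJ']
      have hvc : Valued.v (c * (Xvar p ^ j) ^ d) = oA (e - (j : ℤ) * d) := by
        rw [map_mul, map_pow, v_X_pow, he, oA_pow, oA_mul]
        congr 1
        push_cast
        ring
      have hsplit : f (z₀ + (Xvar p ^ j) • vv) - f z₀
          = (f (z₀ + (Xvar p ^ j) • vv) - a 0 - c * (Xvar p ^ j) ^ d)
            + c * (Xvar p ^ j) ^ d := by
        rw [hfz₀]; ring
      have hvdiff : Valued.v (f (z₀ + (Xvar p ^ j) • vv) - f z₀) = oA (e - (j : ℤ) * d) := by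
        rw [hsplit, Valuation.map_add_eq_of_lt_right, hvc]
        rw [hvc]
        refine lt_of_le_of_lt hvtail ?_
        rw [oA_lt_iff]
        linarith
      have hD := diff_mem_Dset p ℓ hℓ1 (hfH _ (htU hzjt)) (hfH _ hz₀)
      rcases hD with h0 | ⟨k, hk⟩
      · rw [h0, map_zero] at hvdiff
        exact absurd hvdiff.symm (oA_ne_zero _)
      · refine ⟨k, ?_⟩
        rw [hvdiff] at hk
        have hkk := oA_inj hk
        linarith [hkk]
    exact endgame p ℓ hℓ1 hd_pos e J₀ hall
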